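/- For a ∈ {x,y,z}, define the real 6×6 matrix Λ^a, indexed by single-qubit configurations, by Λ^a_{(s,α),(s',α')} := ε_{a,α,α'}² − (1 − δ_{a,α})·δ_{α,α'}. Then: (i) for every configuration (s,α), Σ_{(s',α')} Λ^a_{(s,α),(s',α')} • P_{s',α'} = 0 (the zero 2×2 complex matrix); and (ii) for every configuration (s',α'), Σ_{(s,α)} Λ^a_{(s,α),(s',α')} = 0. Hence Λ^a is a valid gauge transformation of the Markov-matrix representation. -/
import Mathlib


open Matrix Kronecker Finset
open scoped Classical

noncomputable section

/-- The Pauli matrices σ_x, σ_y, σ_z, indexed by `0, 1, 2 : Fin 3`. -/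
def σp : Fin 3 → Matrix (Fin 2) (Fin 2) ℂ :=
  ![!![0, 1; 1, 0], !![0, -Complex.I; Complex.I, 0], !![1, 0; 0, -1]]

/-- The sign values `+1, −1`, indexed by `Fin 2`. -/
def sgn : Fin 2 → ℝ := ![1, -1]

/-- The spin projector `P_{s,α} = (1/2)(1 + s • σ_α)`. -/
def Pspin (s : ℝ) (α : Fin 3) : Matrix (Fin 2) (Fin 2) ℂ :=
  (2 : ℂ)⁻¹ • (1 + (s : ℂ) • σp α)

/-- A single-qubit classical configuration: a sign and an axis. -/
abbrev Conf1 := Fin 2 × Fin 3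

/-- The projector attached to a single-qubit configuration. -/
def Pc (c : Conf1) : Matrix (Fin 2) (Fin 2) ℂ := Pspin (sgn c.1) c.2

/-- A two-qubit classical configuration. -/
abbrev Conf2 := Conf1 × Conf1

/-- The projector attached to a two-qubit configuration (Kronecker product). -/
def Pc2 (C : Conf2) : Matrix (Fin 2 × Fin 2) (Fin 2 × Fin 2) ℂ :=
  Pc C.1 ⊗ₖ Pc C.2

/-- Dual dissipative channel `𝒟[A](X) = A† X A − (1/2)(A†A X + X A†A)`. -/
def Dcal {n : Type*} [Fintype n] (A X : Matrix n n ℂ) : Matrix n n ℂ :=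
  Aᴴ * X * A - (2 : ℂ)⁻¹ • (Aᴴ * A * X + X * (Aᴴ * A))

/-- The Levi-Civita symbol on `{x,y,z}` (indexed by `Fin 3`), with `ε_{0,1,2} = 1`. -/
def eps (a b c : Fin 3) : ℝ :=
  if (a, b, c) = (0, 1, 2) ∨ (a, b, c) = (1, 2, 0) ∨ (a, b, c) = (2, 0, 1) then 1
  else if (a, b, c) = (2, 1, 0) ∨ (a, b, c) = (1, 0, 2) ∨ (a, b, c) = (0, 2, 1) then -1
  else 0

/-- The Kronecker delta, valued in `ℝ`. -/
def kd {X : Type*} (a b : X) : ℝ := if a = b then 1 else 0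

/-- The canonical single-site gauge transformation
`Λ^a_{(s,α),(s',α')} = ε_{a,α,α'}² − (1 − δ_{a,α}) δ_{α,α'}`. -/
def Λa (a : Fin 3) : Conf1 → Conf1 → ℝ := fun C C' =>
  (eps a C.2 C'.2) ^ 2 - (1 - kd a C.2) * kd C.2 C'.2

set_option maxHeartbeats 1600000 in
/-- `Λ^a` is a valid gauge transformation: (i) each row annihilates the projectors,
and (ii) each column sums to zero. -/
theorem canonical_gauge_single_site (a : Fin 3) :
    (∀ C : Conf1, ∑ C' : Conf1, Λa a C C' • Pc C' = (0 : Matrix (Fin 2) (Fin 2) ℂ)) ∧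
    (∀ C' : Conf1, ∑ C : Conf1, Λa a C C' = 0) := by
  have hP : ∀ α' : Fin 3, Pc (0, α') + Pc (1, α') = (1 : Matrix (Fin 2) (Fin 2) ℂ) := by
    intro α'
    fin_cases α' <;>
      · ext i j
        fin_cases i <;> fin_cases j <;>
          (simp [Pc, Pspin, σp, sgn, Matrix.add_apply, Matrix.smul_apply, Matrix.one_apply] <;>
            ring_nf)
  constructor
  · rintro ⟨s, α⟩
    have hrow : ∑ α' : Fin 3, Λa a (s, α) (0, α') = 0 := by
      fin_cases a <;> fin_cases α <;>
        (simp only [Fin.sum_univ_succ, Fin.sum_univ_zero, Λa, eps, kd] <;> norm_num [Prod.ext_iff, Fin.ext_iff])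
    calc ∑ C' : Conf1, Λa a (s, α) C' • Pc C'
        = ∑ α' : Fin 3, ∑ s' : Fin 2, Λa a (s, α) (s', α') • Pc (s', α') := by
          rw [Fintype.sum_prod_type_right]
      _ = ∑ α' : Fin 3, Λa a (s, α) (0, α') • (Pc (0, α') + Pc (1, α')) := by
          refine Finset.sum_congr rfl fun α' _ => ?_
          simp [Fin.sum_univ_succ, smul_add, Λa]
      _ = ∑ α' : Fin 3, Λa a (s, α) (0, α') • (1 : Matrix (Fin 2) (Fin 2) ℂ) := by
          simp_rw [hP]
      _ = (∑ α' : Fin 3, Λa a (s, α) (0, α')) • (1 : Matrix (Fin 2) (Fin 2) ℂ) := by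
          rw [Finset.sum_smul]
      _ = 0 := by rw [hrow, zero_smul]
  · rintro ⟨s', α'⟩
    rw [Fintype.sum_prod_type]
    fin_cases a <;> fin_cases s' <;> fin_cases α' <;>
      (simp only [Fin.sum_univ_succ, Fin.sum_univ_zero, Λa, eps, kd] <;> norm_num [Prod.ext_iff, Fin.ext_iff])
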